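/- Let Ω ⊂ ℝ^d be a bounded domain, σ ∈ (0,1), σ₁ ∈ (0,1), σ₂ ∈ (0,1) with σ + σ₁ > 1 in the case d = 2. Let x ∈ Ω and let δ(y) = dist(y, ∂Ω). Suppose G : Ω → ℝ satisfies |G(y)| ≤ C₀ δ(x)^σ δ(y)^{σ₁} |x−y|^{−σ−σ₁} whenever δ(y) < |x−y|/4, and |G(y)| ≤ C₀ δ(x)^σ |x−y|^{−σ−σ₂} whenever δ(y) ≥ |x−y|/4 (taking d = 2). Then ∫_Ω |G(y)| δ(y)^{σ−1} dy ≤ C δ(x)^σ, with C depending only on C₀, σ, σ₁, σ₂, Ω. -/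

import Mathlib

open MeasureTheory Metric Set Bornology
open scoped ENNReal
noncomputable section

lemma aux_integrableOn {a : ℝ} (ha : 0 < a) (ha2 : a < 2) (R : ℝ) :
    IntegrableOn (fun y : EuclideanSpace ℝ (Fin 2) => ‖y‖ ^ (-a)) (Metric.ball 0 R) := by
  set E := EuclideanSpace ℝ (Fin 2)
  set μ := volume.restrict (Metric.ball (0 : E) R) with hμ
  have hmeas : Measurable fun y : E => ‖y‖ ^ (-a) := measurable_norm.pow_const _
  refine ⟨hmeas.aestronglyMeasurable, ?_⟩
  rw [hasFiniteIntegral_iff_norm]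
  have h1 : ∀ y : E, ENNReal.ofReal ‖(‖y‖ ^ (-a))‖ = ENNReal.ofReal (‖y‖ ^ (-a)) := by
    intro y; rw [Real.norm_eq_abs, abs_of_nonneg (by positivity)]
  calc (∫⁻ y, ENNReal.ofReal ‖(‖y‖ ^ (-a))‖ ∂μ)
      = ∫⁻ y, ENNReal.ofReal (‖y‖ ^ (-a)) ∂μ := lintegral_congr fun y => by rw [h1]
    _ = ∫⁻ t in Ioi 0, μ {y : E | t ≤ ‖y‖ ^ (-a)} := by
        exact lintegral_eq_lintegral_meas_le μ (Filter.Eventually.of_forall fun y => by positivity)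
          hmeas.aemeasurable
    _ ≤ ∫⁻ t in Ioc 0 1 ∪ Ioi 1, μ {y : E | t ≤ ‖y‖ ^ (-a)} :=
        lintegral_mono_set Ioi_subset_Ioc_union_Ioi
    _ ≤ (∫⁻ t in Ioc 0 1, μ {y : E | t ≤ ‖y‖ ^ (-a)}) +
        ∫⁻ t in Ioi 1, μ {y : E | t ≤ ‖y‖ ^ (-a)} := lintegral_union_le _ _ _
    _ < ∞ := by
        rw [ENNReal.add_lt_top]
        constructor
        · calc (∫⁻ t in Ioc 0 1, μ {y : E | t ≤ ‖y‖ ^ (-a)})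
              ≤ ∫⁻ _t in Ioc (0:ℝ) 1, volume (Metric.ball (0 : E) R) := by
                refine setLIntegral_mono' measurableSet_Ioc fun t _ => ?_
                calc μ {y : E | t ≤ ‖y‖ ^ (-a)} ≤ μ univ := measure_mono (subset_univ _)
                  _ = volume (Metric.ball (0 : E) R) := by
                      rw [hμ, Measure.restrict_apply_univ]
            _ = volume (Metric.ball (0 : E) R) * volume (Ioc (0:ℝ) 1) := setLIntegral_const _ _
            _ < ∞ := by
                refine ENNReal.mul_lt_top measure_ball_lt_top ?_
                simp [Real.volume_Ioc]
        · have hsub : ∀ t ∈ Ioi (1:ℝ), μ {y : E | t ≤ ‖y‖ ^ (-a)}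
              ≤ ENNReal.ofReal (t ^ (-a⁻¹ * 2)) * volume (Metric.ball (0 : E) 1) := by
            intro t ht
            have ht1 : (1:ℝ) < t := ht
            have ht0 : (0:ℝ) < t := lt_trans one_pos ht1
            have hss : {y : E | t ≤ ‖y‖ ^ (-a)} ⊆ Metric.closedBall 0 (t ^ (-a⁻¹)) := by
              intro y hy
              simp only [mem_setOf_eq] at hy
              have hy0 : 0 < ‖y‖ := by
                rcases (norm_nonneg y).lt_or_eq with h | h
                · exact h
                · exfalso
                  rw [← h, Real.zero_rpow (by linarith : -a ≠ 0)] at hy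
                  linarith
              have := Real.rpow_le_rpow_of_nonpos ht0 hy (neg_nonpos.mpr (inv_nonneg.mpr ha.le))
              rw [← Real.rpow_mul (norm_nonneg y), neg_mul_neg, mul_inv_cancel₀ ha.ne',
                Real.rpow_one] at this
              exact mem_closedBall_zero_iff.mpr this
            calc μ {y : E | t ≤ ‖y‖ ^ (-a)} ≤ volume {y : E | t ≤ ‖y‖ ^ (-a)} :=
                  Measure.restrict_le_self _
              _ ≤ volume (Metric.closedBall (0:E) (t ^ (-a⁻¹))) := measure_mono hss
              _ = ENNReal.ofReal ((t ^ (-a⁻¹)) ^ Module.finrank ℝ E) *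
                    volume (Metric.ball (0:E) 1) :=
                  Measure.addHaar_closedBall _ _ (Real.rpow_nonneg ht0.le _)
              _ = ENNReal.ofReal (t ^ (-a⁻¹ * 2)) * volume (Metric.ball (0:E) 1) := by
                  congr 2
                  have : Module.finrank ℝ E = 2 := by simp [E, finrank_euclideanSpace]
                  rw [this, ← Real.rpow_natCast (t ^ (-a⁻¹)) 2, ← Real.rpow_mul ht0.le]
                  norm_num
          calc (∫⁻ t in Ioi 1, μ {y : E | t ≤ ‖y‖ ^ (-a)})
              ≤ ∫⁻ t in Ioi (1:ℝ),
                  ENNReal.ofReal (t ^ (-a⁻¹ * 2)) * volume (Metric.ball (0 : E) 1) :=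
                setLIntegral_mono' measurableSet_Ioi hsub
            _ = (∫⁻ t in Ioi (1:ℝ), ENNReal.ofReal (t ^ (-a⁻¹ * 2))) *
                  volume (Metric.ball (0 : E) 1) :=
                lintegral_mul_const' _ _ measure_ball_lt_top.ne
            _ < ∞ := by
                refine ENNReal.mul_lt_top ?_ measure_ball_lt_top
                refine IntegrableOn.setLIntegral_lt_top ?_
                refine integrableOn_Ioi_rpow_of_lt ?_ one_pos
                rw [neg_mul, neg_lt_neg_iff, inv_mul_eq_div]
                exact (one_lt_div ha).mpr ha2

set_option maxHeartbeats 1000000 in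
/-- Weighted integral bound for a function with Green-function-type pointwise bounds
(in dimension two): `∫_Ω |G(y)| δ(y)^{σ-1} dy ≤ C δ(x)^σ`. -/
theorem green_weighted_integral_bound
    (Ω : Set (EuclideanSpace ℝ (Fin 2))) (hΩo : IsOpen Ω) (hΩb : IsBounded Ω)
    (hΩne : Ω.Nonempty)
    (σ σ₁ σ₂ : ℝ) (hσ : σ ∈ Ioo (0 : ℝ) 1) (hσ₁ : σ₁ ∈ Ioo (0 : ℝ) 1)
    (hσ₂ : σ₂ ∈ Ioo (0 : ℝ) 1) (hsum : 1 < σ + σ₁)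
    (C₀ : ℝ) (hC₀ : 0 < C₀) :
    ∃ C > (0 : ℝ), ∀ x ∈ Ω, ∀ G : EuclideanSpace ℝ (Fin 2) → ℝ, Measurable G →
      (∀ y ∈ Ω, y ≠ x → infDist y Ωᶜ < dist x y / 4 →
        |G y| ≤ C₀ * infDist x Ωᶜ ^ σ * infDist y Ωᶜ ^ σ₁ * dist x y ^ (-(σ + σ₁))) →
      (∀ y ∈ Ω, y ≠ x → dist x y / 4 ≤ infDist y Ωᶜ →
        |G y| ≤ C₀ * infDist x Ωᶜ ^ σ * dist x y ^ (-(σ + σ₂))) →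
      (∫ y in Ω, |G y| * infDist y Ωᶜ ^ (σ - 1)) ≤ C * infDist x Ωᶜ ^ σ := by
  classical
  obtain ⟨hσ0, hσ1'⟩ := hσ
  obtain ⟨hσ₁0, hσ₁1⟩ := hσ₁
  obtain ⟨hσ₂0, hσ₂1⟩ := hσ₂
  set R : ℝ := diam Ω + 1 with hR_def
  have hR : 0 < R := by have := diam_nonneg (s := Ω); linarith
  set a : ℝ := 1 + σ₂ with ha_def
  have ha : 0 < a := by linarith
  have ha2 : a < 2 := by linarith
  have hint0 : IntegrableOn (fun z : EuclideanSpace ℝ (Fin 2) => ‖z‖ ^ (-a)) (ball 0 R) := aux_integrableOn ha ha2 R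
  set M : ℝ := ∫ z in ball (0:EuclideanSpace ℝ (Fin 2)) R, ‖z‖ ^ (-a) with hM_def
  have hM0 : 0 ≤ M := setIntegral_nonneg measurableSet_ball fun z _ => by positivity
  set K : ℝ := C₀ * (4 + R ^ σ₂) with hK_def
  have hRσ : 0 < R ^ σ₂ := Real.rpow_pos_of_pos hR _
  have hK0 : 0 < K := by
    have : (0:ℝ) < 4 + R ^ σ₂ := by linarith
    positivity
  refine ⟨K * M + 1, by positivity, ?_⟩
  intro x hx G hGm h1 h2
  have hδx : 0 ≤ infDist x Ωᶜ := infDist_nonneg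
  have hΩball : Ω ⊆ ball x R := by
    intro y hy
    have := dist_le_diam_of_mem hΩb hy hx
    rw [mem_ball]
    linarith
  have h4 : ((· - x) ⁻¹' ball (0:EuclideanSpace ℝ (Fin 2)) R) = ball x R := by
    ext y; simp [mem_ball, dist_eq_norm]
  have hmp := (measurePreserving_sub_right (volume : Measure (EuclideanSpace ℝ (Fin 2))) x).restrict_preimage_emb
      (Homeomorph.subRight x).measurableEmbedding (ball (0:EuclideanSpace ℝ (Fin 2)) R)
  have hker_ball : IntegrableOn (fun y : EuclideanSpace ℝ (Fin 2) => ‖y - x‖ ^ (-a)) (ball x R) := by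
    have := (hmp.integrable_comp_emb (Homeomorph.subRight x).measurableEmbedding).mpr hint0
    rw [h4] at this
    exact this
  have hval : (∫ y in ball x R, ‖y - x‖ ^ (-a)) = M := by
    have := (measurePreserving_sub_right (volume : Measure (EuclideanSpace ℝ (Fin 2))) x).setIntegral_preimage_emb
        (Homeomorph.subRight x).measurableEmbedding (fun z => ‖z‖ ^ (-a)) (ball (0:EuclideanSpace ℝ (Fin 2)) R)
    rw [h4] at this
    exact this
  -- pointwise bound
  have key : ∀ y ∈ Ω, y ≠ x →
      |G y| * infDist y Ωᶜ ^ (σ - 1) ≤ K * infDist x Ωᶜ ^ σ * ‖y - x‖ ^ (-a) := by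
    intro y hy hyx
    have hd0 : 0 < dist x y := dist_pos.mpr hyx.symm
    have hdR : dist x y < R := by
      have := hΩball hy
      rw [mem_ball] at this
      rwa [dist_comm]
    have hnorm : ‖y - x‖ = dist x y := by rw [dist_comm, dist_eq_norm]
    rw [hnorm]
    set d := dist x y
    have hδy0 : 0 ≤ infDist y Ωᶜ := infDist_nonneg
    have hda : 0 < d ^ (-a) := Real.rpow_pos_of_pos hd0 _
    rcases lt_or_ge (infDist y Ωᶜ) (d / 4) with hcase | hcase
    · rcases hδy0.lt_or_eq with hδy | hzero
      · have hG := h1 y hy hyx hcase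
        have e1 : infDist y Ωᶜ ^ σ₁ * infDist y Ωᶜ ^ (σ - 1) = infDist y Ωᶜ ^ (σ₁ + (σ - 1)) :=
          (Real.rpow_add hδy _ _).symm
        calc |G y| * infDist y Ωᶜ ^ (σ - 1)
            ≤ (C₀ * infDist x Ωᶜ ^ σ * infDist y Ωᶜ ^ σ₁ * d ^ (-(σ + σ₁))) *
              infDist y Ωᶜ ^ (σ - 1) := by
              exact mul_le_mul_of_nonneg_right hG (Real.rpow_nonneg hδy0 _)
          _ = C₀ * infDist x Ωᶜ ^ σ *
              (infDist y Ωᶜ ^ (σ₁ + (σ - 1)) * d ^ (-(σ + σ₁))) := by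
              rw [← e1]; ring
          _ ≤ C₀ * infDist x Ωᶜ ^ σ * (d ^ (σ₁ + (σ - 1)) * d ^ (-(σ + σ₁))) := by
              have hle : infDist y Ωᶜ ^ (σ₁ + (σ - 1)) ≤ d ^ (σ₁ + (σ - 1)) :=
                Real.rpow_le_rpow hδy0 (by linarith) (by linarith)
              have hd' : 0 ≤ d ^ (-(σ + σ₁)) := Real.rpow_nonneg hd0.le _
              have h0 : 0 ≤ C₀ * infDist x Ωᶜ ^ σ := by positivity
              exact mul_le_mul_of_nonneg_left (mul_le_mul_of_nonneg_right hle hd') h0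
          _ = C₀ * infDist x Ωᶜ ^ σ * (d ^ σ₂ * d ^ (-a)) := by
              rw [ha_def, ← Real.rpow_add hd0, ← Real.rpow_add hd0]
              ring_nf
          _ ≤ C₀ * infDist x Ωᶜ ^ σ * (R ^ σ₂ * d ^ (-a)) := by
              have : d ^ σ₂ ≤ R ^ σ₂ := Real.rpow_le_rpow hd0.le hdR.le hσ₂0.le
              have h0 : 0 ≤ C₀ * infDist x Ωᶜ ^ σ := by positivity
              exact mul_le_mul_of_nonneg_left (mul_le_mul_of_nonneg_right this hda.le) h0
          _ ≤ K * infDist x Ωᶜ ^ σ * d ^ (-a) := by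
              have hxa : 0 ≤ infDist x Ωᶜ ^ σ := Real.rpow_nonneg hδx _
              have hcc : C₀ * R ^ σ₂ ≤ K := by rw [hK_def]; nlinarith
              calc C₀ * infDist x Ωᶜ ^ σ * (R ^ σ₂ * d ^ (-a))
                  = (C₀ * R ^ σ₂) * (infDist x Ωᶜ ^ σ * d ^ (-a)) := by ring
                _ ≤ K * (infDist x Ωᶜ ^ σ * d ^ (-a)) :=
                    mul_le_mul_of_nonneg_right hcc (by positivity)
                _ = K * infDist x Ωᶜ ^ σ * d ^ (-a) := by ring
      · rw [← hzero, Real.zero_rpow (by intro h; apply absurd h; intro h'; linarith : σ - 1 ≠ 0),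
          mul_zero]
        positivity
    · have hG := h2 y hy hyx hcase
      have hd4 : 0 < d / 4 := by linarith
      have hδy : 0 < infDist y Ωᶜ := lt_of_lt_of_le hd4 hcase
      have e2 : infDist y Ωᶜ ^ (σ - 1) ≤ (d / 4) ^ (σ - 1) :=
        Real.rpow_le_rpow_of_nonpos hd4 hcase (by linarith)
      have e3 : (d / 4) ^ (σ - 1) ≤ 4 * d ^ (σ - 1) := by
        rw [Real.div_rpow hd0.le (by norm_num : (0:ℝ) ≤ 4)]
        have h41 : (4:ℝ) ^ (-1 : ℝ) ≤ (4:ℝ) ^ (σ - 1) :=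
          Real.rpow_le_rpow_of_exponent_le (by norm_num) (by linarith)
        have h4pos : (0:ℝ) < (4:ℝ) ^ (-1 : ℝ) := Real.rpow_pos_of_pos (by norm_num) _
        have hnum : 0 ≤ d ^ (σ - 1) := Real.rpow_nonneg hd0.le _
        calc d ^ (σ - 1) / (4:ℝ) ^ (σ - 1) ≤ d ^ (σ - 1) / (4:ℝ) ^ (-1 : ℝ) :=
              div_le_div_of_nonneg_left hnum h4pos h41
          _ = 4 * d ^ (σ - 1) := by
              rw [Real.rpow_neg_one, div_eq_mul_inv, inv_inv]
              ring
      calc |G y| * infDist y Ωᶜ ^ (σ - 1)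
          ≤ (C₀ * infDist x Ωᶜ ^ σ * d ^ (-(σ + σ₂))) * (4 * d ^ (σ - 1)) := by
            refine mul_le_mul hG (e2.trans e3) (Real.rpow_nonneg hδy0 _) ?_
            positivity
        _ = (4 * C₀) * infDist x Ωᶜ ^ σ * (d ^ (-(σ + σ₂)) * d ^ (σ - 1)) := by ring
        _ = (4 * C₀) * infDist x Ωᶜ ^ σ * d ^ (-a) := by
            rw [ha_def, ← Real.rpow_add hd0]
            ring_nf
        _ ≤ K * infDist x Ωᶜ ^ σ * d ^ (-a) := by
            have hcc : 4 * C₀ ≤ K := by rw [hK_def]; nlinarith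
            have : 0 ≤ infDist x Ωᶜ ^ σ * d ^ (-a) := by positivity
            calc (4 * C₀) * infDist x Ωᶜ ^ σ * d ^ (-a)
                = (4 * C₀) * (infDist x Ωᶜ ^ σ * d ^ (-a)) := by ring
              _ ≤ K * (infDist x Ωᶜ ^ σ * d ^ (-a)) := mul_le_mul_of_nonneg_right hcc this
              _ = K * infDist x Ωᶜ ^ σ * d ^ (-a) := by ring
  -- integrability and integral comparison
  set F : EuclideanSpace ℝ (Fin 2) → ℝ := fun y => K * infDist x Ωᶜ ^ σ * ‖y - x‖ ^ (-a) with hF_def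
  have hkerΩ : IntegrableOn (fun y : EuclideanSpace ℝ (Fin 2) => ‖y - x‖ ^ (-a)) Ω := hker_ball.mono_set hΩball
  have hFint : IntegrableOn F Ω := hkerΩ.const_mul _
  have hmeasδ : Measurable fun y : EuclideanSpace ℝ (Fin 2) => infDist y Ωᶜ :=
    (continuous_infDist_pt _).measurable
  have hGmeas : AEStronglyMeasurable (fun y : EuclideanSpace ℝ (Fin 2) => |G y| * infDist y Ωᶜ ^ (σ - 1))
      (volume.restrict Ω) :=
    (hGm.abs.mul (hmeasδ.pow_const _)).aestronglyMeasurable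
  have haeΩ : ∀ᵐ y ∂(volume.restrict Ω), y ∈ Ω := ae_restrict_mem hΩo.measurableSet
  have haex : ∀ᵐ y ∂(volume.restrict Ω), y ≠ x := by
    refine ae_restrict_of_ae ?_
    have : (volume : Measure (EuclideanSpace ℝ (Fin 2))) {x} = 0 := measure_singleton x
    rw [Filter.eventually_iff, mem_ae_iff]
    convert this using 2
    ext y
    simp
  have hae : ∀ᵐ y ∂(volume.restrict Ω), |G y| * infDist y Ωᶜ ^ (σ - 1) ≤ F y := by
    filter_upwards [haeΩ, haex] with y hy hyx
    exact key y hy hyx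
  have hGint : IntegrableOn (fun y : EuclideanSpace ℝ (Fin 2) => |G y| * infDist y Ωᶜ ^ (σ - 1)) Ω := by
    refine Integrable.mono' hFint hGmeas ?_
    filter_upwards [hae] with y hy
    rw [Real.norm_eq_abs,
      abs_of_nonneg (mul_nonneg (abs_nonneg _) (Real.rpow_nonneg infDist_nonneg _))]
    exact hy
  calc (∫ y in Ω, |G y| * infDist y Ωᶜ ^ (σ - 1))
      ≤ ∫ y in Ω, F y := integral_mono_ae hGint hFint hae
    _ = K * infDist x Ωᶜ ^ σ * ∫ y in Ω, ‖y - x‖ ^ (-a) := by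
        rw [hF_def]
        exact integral_const_mul _ _
    _ ≤ K * infDist x Ωᶜ ^ σ * ∫ y in ball x R, ‖y - x‖ ^ (-a) := by
        refine mul_le_mul_of_nonneg_left ?_ (by positivity)
        refine setIntegral_mono_set hker_ball ?_ (HasSubset.Subset.eventuallyLE hΩball)
        exact Filter.Eventually.of_forall fun y => Real.rpow_nonneg (norm_nonneg _) _
    _ = K * infDist x Ωᶜ ^ σ * M := by rw [hval]
    _ ≤ (K * M + 1) * infDist x Ωᶜ ^ σ := by
        have : 0 ≤ infDist x Ωᶜ ^ σ := Real.rpow_nonneg hδx _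
        nlinarith
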